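/- Let G be a unicyclic graph with n vertices whose unique cycle C has length ℓ. Then η_per(G) = n − 2ν(G) − 1 if ℓ is odd and ν(G) = (ℓ−1)/2 + ν(G − V(C)), and η_per(G) = n − 2ν(G) otherwise. -/

import Mathlib

/-
Expanding the permanent, `per(xI - A(G)) = ∑ (-1)^|supp σ| x^(n - |supp σ|)`, the sum running
over the permutations `σ` that move every vertex they move to a neighbour. All terms of lowest
degree carry the same sign, so `η_per(G) = n - K`, where `K` is the largest support of such a `σ`.

The 2-cycles of such a `σ` form a matching, and each longer cycle of `σ` traces a cycle of `G`,
which must be `C`; conversely `C` itself and matchings give such permutations. Hence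
`K = max (2ν(G)) (ℓ + 2ν(G - V(C)))`. Since `⌊ℓ/2⌋` edges of `C` together with a maximum
matching of `G - V(C)` form a matching of `G`, this maximum exceeds `2ν(G)` exactly when `ℓ` is
odd and `ν(G) = (ℓ - 1)/2 + ν(G - V(C))`, and then it is `2ν(G) + 1`.
-/

open Polynomial SimpleGraph

open scoped Classical in
/-- The permanental polynomial `per(xI - A(G))` of a graph. -/
noncomputable def permPoly {V : Type*} [Fintype V] (G : SimpleGraph V) : Polynomial ℤ :=
  Matrix.permanent
    ((Polynomial.X : ℤ[X]) • (1 : Matrix V V ℤ[X]) -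
      Matrix.of fun i j => if G.Adj i j then (1 : ℤ[X]) else 0)

/-- The permanental nullity: multiplicity of 0 as a root of the permanental polynomial. -/
noncomputable def perNullity {V : Type*} [Fintype V] (G : SimpleGraph V) : ℕ :=
  (permPoly G).rootMultiplicity 0

/-- Degree of a vertex in a subgraph. -/
noncomputable def subDeg {V : Type*} {G : SimpleGraph V} (H : G.Subgraph) (v : V) : ℕ :=
  (H.neighborSet v).ncard

/-- A Sachs subgraph: every component is a single edge or a cycle. -/
def IsSachs {V : Type*} {G : SimpleGraph V} (H : G.Subgraph) : Prop :=
  (∀ v ∈ H.verts, subDeg H v = 1 ∨ subDeg H v = 2) ∧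
    ∀ u v, H.Adj u v → subDeg H u = 1 → subDeg H v ≠ 2

/-- Number of cycle components of a Sachs subgraph. -/
noncomputable def cyclesCount {V : Type*} {G : SimpleGraph V} (H : G.Subgraph) : ℕ :=
  H.edgeSet.ncard + Nat.card H.coe.ConnectedComponent - H.verts.ncard

/-- Matching number. -/
noncomputable def matchingNumber {V : Type*} [Fintype V] (G : SimpleGraph V) : ℕ :=
  sSup {n | ∃ M : G.Subgraph, M.IsMatching ∧ M.edgeSet.ncard = n}

/-- A maximum matching. -/
def IsMaximumMatching {V : Type*} {G : SimpleGraph V} (M : G.Subgraph) : Prop :=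
  M.IsMatching ∧ ∀ N : G.Subgraph, N.IsMatching → N.edgeSet.ncard ≤ M.edgeSet.ncard

/-- `D(G)`: vertices missed by at least one maximum matching. -/
def DSet {V : Type*} (G : SimpleGraph V) : Set V :=
  {v | ∃ M : G.Subgraph, IsMaximumMatching M ∧ v ∉ M.verts}

/-- `B(G)`: vertices outside `D(G)` adjacent to `D(G)`. -/
def BSet {V : Type*} (G : SimpleGraph V) : Set V :=
  {v | v ∉ DSet G ∧ ∃ u ∈ DSet G, G.Adj v u}

/-- `C(G)`. -/
def CSet {V : Type*} (G : SimpleGraph V) : Set V :=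
  (DSet G ∪ BSet G)ᶜ

/-- Factor-critical graph. -/
def IsFactorCritical {W : Type*} (H : SimpleGraph W) : Prop :=
  ∀ v : W, ∃ M : (H.induce ({v}ᶜ : Set W)).Subgraph, M.IsPerfectMatching


open Finset

namespace Equiv.Perm

variable {α : Type*}

lemma SameCycle.apply_apply_eq_self_iff {σ : Perm α} {x y : α} (h : σ.SameCycle x y) :
    σ (σ x) = x ↔ σ (σ y) = y := by
  obtain ⟨i, rfl⟩ := h
  have hcomm (z : α) : σ ((σ ^ i) z) = (σ ^ i) (σ z) := by
    simpa using σ.zpow_apply_comm 1 i (x := z)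
  rw [hcomm, hcomm, (σ ^ i).injective.eq_iff]

lemma three_le_card_support_cycleOf [Fintype α] [DecidableEq α] {σ : Perm α} {x : α}
    (hx : σ (σ x) ≠ x) : 3 ≤ (σ.cycleOf x).support.card := by
  refine lt_of_le_of_ne (two_le_card_support_cycleOf_iff.2 fun h => hx (by rw [h, h]))
    fun h => hx ?_
  have := σ.pow_mod_card_support_cycleOf_self_apply 2 x
  rwa [← h, Nat.mod_self, pow_zero, pow_two, eq_comm] at this

end Equiv.Perm

namespace SimpleGraph

variable {V : Type*} {G : SimpleGraph V}

def MovesAlongEdges (G : SimpleGraph V) (σ : Equiv.Perm V) : Prop :=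
  ∀ v, σ v ≠ v → G.Adj v (σ v)

lemma MovesAlongEdges.mul {σ τ : Equiv.Perm V} (hσ : G.MovesAlongEdges σ)
    (hτ : G.MovesAlongEdges τ) (hd : σ.Disjoint τ) : G.MovesAlongEdges (σ * τ) := by
  intro v hv
  rw [Equiv.Perm.mul_apply] at hv ⊢
  by_cases hτv : τ v = v
  · rw [hτv] at hv ⊢
    exact hσ v hv
  · rw [(hd (τ v)).resolve_right fun h => hτv (τ.injective h)]
    exact hτ v hτv

section Permanent

open scoped Classical

noncomputable def maxMovedCard [Fintype V] (G : SimpleGraph V) : ℕ :=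
  (univ.filter G.MovesAlongEdges).sup fun σ => #σ.support

lemma maxMovedCard_le_card [Fintype V] (G : SimpleGraph V) :
    G.maxMovedCard ≤ Fintype.card V :=
  Finset.sup_le fun _ _ => card_le_univ _

lemma MovesAlongEdges.ncard_le_maxMovedCard [Fintype V] {σ : Equiv.Perm V}
    (hσ : G.MovesAlongEdges σ) : {v | σ v ≠ v}.ncard ≤ G.maxMovedCard := by
  rw [← Equiv.Perm.coe_support_eq_set_support, Set.ncard_coe_finset]
  exact le_sup (f := fun σ => #σ.support) (mem_filter.2 ⟨mem_univ σ, hσ⟩)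

lemma permPoly_eq_sum [Fintype V] (G : SimpleGraph V) :
    permPoly G = ∑ σ ∈ univ.filter G.MovesAlongEdges,
      C ((-1) ^ #σ.support) * X ^ (Fintype.card V - #σ.support) := by
  rw [permPoly, Matrix.permanent, Finset.sum_filter]
  refine Finset.sum_congr rfl fun σ _ => ?_
  have hentry (i : V) : ((X : ℤ[X]) • (1 : Matrix V V ℤ[X]) -
      Matrix.of fun i j => if G.Adj i j then (1 : ℤ[X]) else 0) (σ i) i =
      if σ i = i then X else -(if G.Adj i (σ i) then 1 else 0) := by
    split_ifs with h <;> simp_all [Matrix.one_apply_ne, G.adj_comm]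
  have hmoved : univ.filter (fun i => ¬σ i = i) = σ.support := rfl
  have hfixed : univ.filter (fun i => σ i = i) = σ.supportᶜ := by ext; simp
  rw [prod_congr rfl fun i _ => hentry i, prod_ite, prod_const, prod_neg, prod_boole, hmoved,
    hfixed, card_compl]
  by_cases hσ : G.MovesAlongEdges σ
  · rw [if_pos fun i hi => hσ i (Equiv.Perm.mem_support.1 hi), if_pos hσ]
    simp [mul_comm]
  · rw [if_neg fun h => hσ fun i hi => h i (Equiv.Perm.mem_support.2 hi), if_neg hσ]
    simp

theorem perNullity_eq_card_sub_maxMovedCard [Fintype V] (G : SimpleGraph V) :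
    perNullity G = Fintype.card V - G.maxMovedCard := by
  set S := univ.filter G.MovesAlongEdges
  set K := G.maxMovedCard
  have hle : ∀ σ ∈ S, #σ.support ≤ K := fun _ hσ => le_sup (f := fun σ => #σ.support) hσ
  set q : ℤ[X] := ∑ σ ∈ S, C ((-1) ^ #σ.support) * X ^ (K - #σ.support)
  have hfactor : permPoly G = q * X ^ (Fintype.card V - K) := by
    rw [permPoly_eq_sum, sum_mul]
    refine sum_congr rfl fun σ hσ => ?_
    rw [mul_assoc, ← pow_add]
    have := hle σ hσ
    have := G.maxMovedCard_le_card
    congr 2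
    omega
  -- only the permutations moving exactly `K` vertices contribute, all with the sign `(-1) ^ K`
  have hq : q.coeff 0 ≠ 0 := by
    obtain ⟨σ₀, hσ₀, hσ₀K⟩ := exists_mem_eq_sup S ⟨1, by simp [S, MovesAlongEdges]⟩
      fun σ => #σ.support
    have hcoeff : q.coeff 0 = ∑ σ ∈ S.filter fun σ => #σ.support = K, (-1) ^ K := by
      rw [finsetSum_coeff]
      conv_rhs => rw [sum_filter]
      refine sum_congr rfl fun σ hσ => ?_
      have := hle σ hσ
      rw [coeff_C_mul_X_pow]
      by_cases h : #σ.support = K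
      · rw [if_pos (by omega), if_pos h, h]
      · rw [if_neg (by omega), if_neg h]
    rw [hcoeff, sum_const, nsmul_eq_mul]
    refine mul_ne_zero (Nat.cast_ne_zero.2 (card_ne_zero.2 ⟨σ₀, ?_⟩)) (by simp)
    exact mem_filter.2 ⟨hσ₀, hσ₀K.symm⟩
  have hq0 : q ≠ 0 := fun h => hq (by rw [h, coeff_zero])
  rw [perNullity, rootMultiplicity_eq_natTrailingDegree', hfactor,
    natTrailingDegree_mul_X_pow hq0, natTrailingDegree_eq_zero.2 (Or.inr hq), zero_add]

end Permanent

namespace Subgraph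

lemma IsMatching.sup_of_disjoint {M M' : G.Subgraph} (hM : M.IsMatching) (hM' : M'.IsMatching)
    (h : Disjoint M.verts M'.verts) : (M ⊔ M').IsMatching :=
  hM.sup hM' (by rwa [hM.support_eq_verts, hM'.support_eq_verts])

lemma IsMatching.ncard_verts [Finite V] {M : G.Subgraph} (hM : M.IsMatching) :
    M.verts.ncard = 2 * M.edgeSet.ncard := by
  classical
  have := Fintype.ofFinite V
  have hdeg (v : M.verts) : M.coe.degree v = 1 := by
    rw [coe_degree, degree_eq_one_iff_existsUnique_adj]
    exact hM v.2
  calc M.verts.ncard = ∑ v : M.verts, M.coe.degree v := by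
        simp [hdeg, Set.ncard_eq_toFinset_card']
    _ = 2 * M.coe.edgeSet.ncard := by
        rw [Set.ncard_eq_toFinset_card', Set.toFinset_card, ← edgeFinset_card]
        convert M.coe.sum_degrees_eq_twice_card_edges
    _ = 2 * M.edgeSet.ncard := by
        rw [← image_coe_edgeSet_coe, Set.ncard_image_of_injective _
          (Sym2.map.injective Subtype.val_injective)]

lemma IsMatching.exists_movesAlongEdges {M : G.Subgraph} (hM : M.IsMatching) :
    ∃ σ : Equiv.Perm V, G.MovesAlongEdges σ ∧ {v | σ v ≠ v} = M.verts := by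
  classical
  let partner (v : V) : V := if h : v ∈ M.verts then (hM h).choose else v
  have hadj {v : V} (hv : v ∈ M.verts) : M.Adj v (partner v) := by
    simpa [partner, hv] using (hM hv).choose_spec.1
  have hinv : Function.Involutive partner := fun v => by
    by_cases hv : v ∈ M.verts
    · exact (hM (hadj hv).snd_mem).unique (hadj (hadj hv).snd_mem) (hadj hv).symm
    · simp [partner, hv]
  refine ⟨hinv.toPerm, fun v hv => ?_,
    Set.ext fun v => ⟨fun hv => ?_, fun hv => (hadj hv).ne.symm⟩⟩
  · by_cases hvM : v ∈ M.verts
    · exact (hadj hvM).adj_sub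
    · simp [partner, hvM] at hv
  · by_contra hvM
    simp [partner, hvM] at hv

end Subgraph

lemma MovesAlongEdges.exists_isMatching {σ : Equiv.Perm V} (hσ : G.MovesAlongEdges σ) :
    ∃ M : G.Subgraph, M.IsMatching ∧ M.verts = {v | σ v ≠ v ∧ σ (σ v) = v} := by
  have hσσ {v : V} (hv : σ v ≠ v) : σ (σ v) ≠ σ v := fun h => hv (σ.injective h)
  refine ⟨{ verts := {v | σ v ≠ v ∧ σ (σ v) = v}
            Adj := fun u v => (σ u ≠ u ∧ σ (σ u) = u) ∧ σ u = v
            adj_sub := fun ⟨⟨hu, _⟩, h⟩ => h ▸ hσ _ hu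
            edge_vert := fun h => h.1
            symm := ⟨fun u v ⟨⟨hu, huu⟩, h⟩ =>
              ⟨⟨h ▸ hσσ hu, by rw [← h, huu]⟩, h ▸ huu⟩⟩ },
    fun v hv => ⟨σ v, ⟨hv, rfl⟩, fun w hw => hw.2.symm⟩, rfl⟩

lemma bddAbove_matchingSizes [Fintype V] (G : SimpleGraph V) :
    BddAbove {n | ∃ M : G.Subgraph, M.IsMatching ∧ M.edgeSet.ncard = n} := by
  refine ⟨Fintype.card V, ?_⟩
  rintro _ ⟨M, hM, rfl⟩
  have := hM.ncard_verts
  have := Set.ncard_le_card M.verts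
  rw [Nat.card_eq_fintype_card] at this
  omega

lemma Subgraph.IsMatching.ncard_verts_le [Fintype V] {M : G.Subgraph} (hM : M.IsMatching) :
    M.verts.ncard ≤ 2 * matchingNumber G := by
  rw [hM.ncard_verts]
  exact Nat.mul_le_mul_left 2 (le_csSup (bddAbove_matchingSizes G) ⟨M, hM, rfl⟩)

lemma exists_isMatching_ncard_verts_eq [Fintype V] (G : SimpleGraph V) :
    ∃ M : G.Subgraph, M.IsMatching ∧ M.verts.ncard = 2 * matchingNumber G := by
  have hne : {n | ∃ M : G.Subgraph, M.IsMatching ∧ M.edgeSet.ncard = n}.Nonempty :=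
    ⟨0, ⊥, fun _ hv => hv.elim, by simp⟩
  obtain ⟨M, hM, hcard⟩ := Nat.sSup_mem hne (bddAbove_matchingSizes G)
  exact ⟨M, hM, by rw [hM.ncard_verts, hcard, matchingNumber]⟩

lemma Subgraph.IsMatching.ncard_verts_le_of_subset {s : Set V} [Fintype s] {M : G.Subgraph}
    (hM : M.IsMatching) (hs : M.verts ⊆ s) :
    M.verts.ncard ≤ 2 * matchingNumber (G.induce s) := by
  set M' := M.comap (Embedding.induce s).toHom
  have hM' : M'.IsMatching := by
    intro v hv
    obtain ⟨w, hvw, hw⟩ := hM hv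
    exact ⟨⟨w, hs hvw.snd_mem⟩, ⟨hvw.adj_sub, hvw⟩, fun u hu => Subtype.ext (hw u hu.2)⟩
  calc M.verts.ncard = M'.verts.ncard := by
        rw [comap_verts]
        refine (Set.ncard_preimage_of_injective_subset_range Subtype.val_injective ?_).symm
        simpa using hs
    _ ≤ 2 * matchingNumber (G.induce s) := hM'.ncard_verts_le

lemma exists_isMatching_subset_ncard_verts_eq (G : SimpleGraph V) (s : Set V) [Fintype s] :
    ∃ M : G.Subgraph, M.IsMatching ∧ M.verts ⊆ s ∧
      M.verts.ncard = 2 * matchingNumber (G.induce s) := by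
  obtain ⟨M, hM, hcard⟩ := exists_isMatching_ncard_verts_eq (G.induce s)
  refine ⟨M.map (Embedding.induce s).toHom, hM.map _ Subtype.val_injective, ?_, ?_⟩
  · rintro _ ⟨v, -, rfl⟩
    exact v.2
  · rw [Subgraph.map_verts, ← hcard]
    exact Set.ncard_image_of_injective _ Subtype.val_injective

lemma Walk.IsPath.exists_isMatching {u v : V} {p : G.Walk u v} (hp : p.IsPath) :
    ∃ M : G.Subgraph, M.IsMatching ∧ M.verts ⊆ {w | w ∈ p.support} ∧
      M.verts.ncard = 2 * ((p.length + 1) / 2) :=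
  match p, hp with
  | .nil, _ => ⟨⊥, fun _ h => h.elim, by simp, by simp⟩
  | .cons h .nil, _ => ⟨G.subgraphOfAdj h, .subgraphOfAdj h, by simp [Set.insert_subset_iff],
      by simp [Set.ncard_pair h.ne]⟩
  | .cons h (.cons _ q), hp => by
    obtain ⟨M, hM, hsub, hcard⟩ := hp.of_cons.of_cons.exists_isMatching
    have hnd := hp.support_nodup
    simp only [Walk.support_cons, List.nodup_cons, List.mem_cons, not_or] at hnd
    have hdisj : Disjoint (G.subgraphOfAdj h).verts M.verts := by
      rw [subgraphOfAdj_verts, Set.disjoint_insert_left, Set.disjoint_singleton_left]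
      exact ⟨fun hu => hnd.1.2 (hsub hu), fun hw => hnd.2.1 (hsub hw)⟩
    refine ⟨G.subgraphOfAdj h ⊔ M,
      (Subgraph.IsMatching.subgraphOfAdj h).sup_of_disjoint hM hdisj, ?_, ?_⟩
    · rw [Subgraph.verts_sup, subgraphOfAdj_verts]
      exact Set.union_subset (by simp [Set.insert_subset_iff])
        fun w hw => List.mem_cons_of_mem _ (List.mem_cons_of_mem _ (hsub hw))
    · rw [Subgraph.verts_sup, subgraphOfAdj_verts] at *
      rw [Set.ncard_union_eq hdisj (Set.toFinite _) ((List.finite_toSet _).subset hsub),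
        Set.ncard_pair h.ne, hcard, Walk.length_cons, Walk.length_cons]
      omega

namespace Walk

lemma IsCycle.setOf_mem_support_eq_tail {u : V} {c : G.Walk u u} (hc : c.IsCycle) :
    {v | v ∈ c.support} = {v | v ∈ c.support.tail} := by
  ext v
  refine (mem_support_iff c).trans ⟨?_, Or.inr⟩
  rintro (rfl | h)
  exacts [end_mem_tail_support hc.not_nil, h]

lemma IsCycle.ncard_support {u : V} {c : G.Walk u u} (hc : c.IsCycle) :
    {v | v ∈ c.support}.ncard = c.length := by
  classical
  rw [hc.setOf_mem_support_eq_tail, ← List.coe_toFinset, Set.ncard_coe_finset,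
    List.toFinset_card_of_nodup hc.support_nodup, List.length_tail, length_support,
    Nat.add_sub_cancel]

lemma IsCycle.exists_movesAlongEdges {u : V} {c : G.Walk u u} (hc : c.IsCycle) :
    ∃ σ : Equiv.Perm V, G.MovesAlongEdges σ ∧ {v | σ v ≠ v} = {v | v ∈ c.support} := by
  classical
  have hlen : c.support.tail.length = c.length := by simp
  have hget (i : ℕ) (hi : i < c.support.tail.length) :
      c.support.tail[i] = c.getVert (i + 1) := by
    rw [List.getElem_tail, support_getElem_eq_getVert]
  refine ⟨c.support.tail.formPerm, fun v hv => ?_, ?_⟩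
  · obtain ⟨i, hi, rfl⟩ := List.getElem_of_mem (List.mem_of_formPerm_apply_ne hv)
    rw [List.formPerm_apply_getElem _ hc.support_nodup, hget, hget]
    rcases Nat.lt_or_ge (i + 1) c.length with h | h
    · rw [Nat.mod_eq_of_lt (hlen ▸ h)]
      exact c.adj_getVert_succ h
    · have hi' : i + 1 = c.length := by omega
      rw [hlen, hi', Nat.mod_self, c.getVert_length]
      simpa using c.adj_getVert_succ (i := 0) (by omega)
  · have := hc.three_le_length
    rw [List.support_formPerm_of_nodup' _ hc.support_nodup
      fun x h => by simp [h] at hlen; omega, hc.setOf_mem_support_eq_tail]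
    simp

lemma IsCycle.length_div_two_add_matchingNumber_le [Fintype V] {u : V} {c : G.Walk u u}
    (hc : c.IsCycle) [Fintype ↑({w | w ∈ c.support}ᶜ : Set V)] :
    c.length / 2 + matchingNumber (G.induce ({w | w ∈ c.support}ᶜ : Set V)) ≤
      matchingNumber G := by
  obtain ⟨M₁, hM₁, hsub₁, hcard₁⟩ := hc.isPath_tail.exists_isMatching
  obtain ⟨M₂, hM₂, hsub₂, hcard₂⟩ :=
    exists_isMatching_subset_ncard_verts_eq G ({w | w ∈ c.support}ᶜ : Set V)
  have hsub₁' : M₁.verts ⊆ {w | w ∈ c.support} := fun w hw => by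
    have := hsub₁ hw
    rw [Set.mem_ofPred_eq, c.support_tail_of_not_nil hc.not_nil] at this
    exact List.mem_of_mem_tail this
  have hdisj : Disjoint M₁.verts M₂.verts :=
    Set.disjoint_of_subset hsub₁' hsub₂ disjoint_compl_right
  have hle := (hM₁.sup_of_disjoint hM₂ hdisj).ncard_verts_le
  rw [Subgraph.verts_sup, Set.ncard_union_eq hdisj, hcard₁, hcard₂] at hle
  rw [← length_tail_add_one hc.not_nil]
  omega

end Walk

lemma cycleGraph.mem_support_cycle {n : ℕ} (k : Fin (n + 3)) :
    k ∈ (cycleGraph.cycle n).support := by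
  have h := cycleGraph.getVert_cycle (n := n) (m := n + 3 - k) (by omega)
  convert Walk.getVert_mem_support _ (n + 3 - k)
  rw [h, Fin.ext_iff]
  simp [Nat.sub_sub_self k.is_lt.le, Nat.mod_eq_of_lt k.is_lt]

lemma exists_isCycle_setOf_mem_support_eq_range {n : ℕ} (f : cycleGraph (n + 3) →g G)
    (hf : Function.Injective f) :
    ∃ (u : V) (c : G.Walk u u), c.IsCycle ∧ {v | v ∈ c.support} = Set.range f := by
  refine ⟨_, (cycleGraph.cycle n).map f,
    (Walk.isCycle_map_iff_of_injective hf).2 cycleGraph.isCycle_cycle, ?_⟩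
  ext v
  simp only [Set.mem_ofPred_eq, Walk.support_map, List.mem_map, Set.mem_range]
  exact ⟨fun ⟨k, _, hk⟩ => ⟨k, hk⟩,
    fun ⟨k, hk⟩ => ⟨k, cycleGraph.mem_support_cycle k, hk⟩⟩

lemma MovesAlongEdges.exists_isCycle [Fintype V] [DecidableEq V] {σ : Equiv.Perm V}
    (hσ : G.MovesAlongEdges σ) {x : V} (hx : σ (σ x) ≠ x) :
    ∃ (u : V) (c : G.Walk u u), c.IsCycle ∧ {v | v ∈ c.support} = (σ.cycleOf x).support := by
  have hσx : σ x ≠ x := fun h => hx (by rw [h, h])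
  obtain ⟨n, hn⟩ := Nat.exists_eq_add_of_le'
    (σ.length_toList x ▸ σ.three_le_card_support_cycleOf hx)
  let f : Fin (n + 3) → V := fun k => (σ.toList x)[k.val]
  have hf (k : Fin (n + 3)) : f k = (σ ^ k.val) x := σ.getElem_toList x _ _
  have hsucc (k : Fin (n + 3)) : f (k + 1) = σ (f k) := by
    have hk : ((k + 1 : Fin (n + 3)) : ℕ) = (k + 1) % (σ.cycleOf x).support.card := by
      rw [← Equiv.Perm.length_toList, hn, Fin.val_add, Fin.val_one]
    rw [hf, hf, hk, σ.pow_mod_card_support_cycleOf_self_apply, pow_succ', Equiv.Perm.mul_apply]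
  have hadj (k : Fin (n + 3)) : G.Adj (f k) (f (k + 1)) := by
    rw [hsucc, hf]
    exact hσ _ ((Equiv.Perm.SameCycle.refl σ x).pow_right.apply_eq_self_iff.not.1 hσx)
  let F : cycleGraph (n + 3) →g G :=
    ⟨f, fun {a b} hab => by
      rcases cycleGraph_adj.1 hab with h | h
      · simpa [← h] using (hadj b).symm
      · simpa [← h] using hadj a⟩
  obtain ⟨u, c, hc, hsupp⟩ := exists_isCycle_setOf_mem_support_eq_range F
    fun a b h => Fin.ext ((σ.nodup_toList x).getElem_inj_iff.1 h)
  refine ⟨u, c, hc, hsupp.trans ?_⟩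
  ext v
  rw [Finset.mem_coe, Equiv.Perm.mem_support_cycleOf_iff, ← Equiv.Perm.mem_toList_iff,
    List.mem_iff_getElem]
  exact ⟨fun ⟨k, hk⟩ => ⟨k, by omega, hk⟩,
    fun ⟨k, hk, hkv⟩ => ⟨⟨k, by omega⟩, hkv⟩⟩

section UniqueCycle

variable [Fintype V] {u : V} {c : G.Walk u u}

lemma MovesAlongEdges.ncard_le_max_of_unique_cycle {σ : Equiv.Perm V}
    (hσ : G.MovesAlongEdges σ) (hc : c.IsCycle)
    (huniq : ∀ (y : V) (d : G.Walk y y), d.IsCycle →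
      {w | w ∈ d.support} = {w | w ∈ c.support})
    [Fintype ↑({w | w ∈ c.support}ᶜ : Set V)] :
    {v | σ v ≠ v}.ncard ≤ max (2 * matchingNumber G)
      (c.length + 2 * matchingNumber (G.induce ({w | w ∈ c.support}ᶜ : Set V))) := by
  classical
  obtain ⟨M, hM, hMverts⟩ := hσ.exists_isMatching
  by_cases hlong : ∃ x, σ (σ x) ≠ x
  · obtain ⟨x, hx⟩ := hlong
    have hcycle {y : V} (hy : σ (σ y) ≠ y) :
        ((σ.cycleOf y).support : Set V) = {w | w ∈ c.support} := by
      obtain ⟨_, d, hd, hdsupp⟩ := hσ.exists_isCycle hy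
      exact hdsupp.symm.trans (huniq _ d hd)
    have hMC : M.verts ⊆ {w | w ∈ c.support}ᶜ := by
      intro v hv hvC
      rw [hMverts] at hv
      rw [← hcycle hx, Finset.mem_coe, Equiv.Perm.mem_support_cycleOf_iff] at hvC
      exact hx (hvC.1.apply_apply_eq_self_iff.2 hv.2)
    have hsupp : {v | σ v ≠ v} ⊆ {w | w ∈ c.support} ∪ M.verts := by
      intro v hv
      by_cases hvv : σ (σ v) = v
      · exact Or.inr (hMverts ▸ ⟨hv, hvv⟩)
      · refine Or.inl (hcycle hvv ▸ ?_)
        exact Equiv.Perm.mem_support_cycleOf_iff.2 ⟨.refl σ v, Equiv.Perm.mem_support.2 hv⟩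
    calc {v | σ v ≠ v}.ncard ≤ ({w | w ∈ c.support} ∪ M.verts).ncard :=
          Set.ncard_le_ncard hsupp
      _ ≤ {w | w ∈ c.support}.ncard + M.verts.ncard := Set.ncard_union_le _ _
      _ ≤ c.length + 2 * matchingNumber (G.induce ({w | w ∈ c.support}ᶜ : Set V)) := by
        rw [hc.ncard_support]
        exact Nat.add_le_add_left (hM.ncard_verts_le_of_subset hMC) _
      _ ≤ _ := le_max_right _ _
  · push Not at hlong
    have hsupp : {v | σ v ≠ v} = M.verts := by
      rw [hMverts]
      exact Set.ext fun v => ⟨fun hv => ⟨hv, hlong v⟩, And.left⟩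
    exact hsupp ▸ hM.ncard_verts_le.trans (le_max_left _ _)

lemma maxMovedCard_eq_max_of_unique_cycle (hc : c.IsCycle)
    (huniq : ∀ (y : V) (d : G.Walk y y), d.IsCycle →
      {w | w ∈ d.support} = {w | w ∈ c.support})
    [Fintype ↑({w | w ∈ c.support}ᶜ : Set V)] :
    G.maxMovedCard = max (2 * matchingNumber G)
      (c.length + 2 * matchingNumber (G.induce ({w | w ∈ c.support}ᶜ : Set V))) := by
  classical
  refine le_antisymm (Finset.sup_le fun σ hσ => ?_) (max_le ?_ ?_)
  · rw [← Set.ncard_coe_finset, Equiv.Perm.coe_support_eq_set_support]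
    exact (mem_filter.1 hσ).2.ncard_le_max_of_unique_cycle hc huniq
  · obtain ⟨M, hM, hcard⟩ := exists_isMatching_ncard_verts_eq G
    obtain ⟨σ, hσ, hσM⟩ := hM.exists_movesAlongEdges
    exact hcard ▸ hσM ▸ hσ.ncard_le_maxMovedCard
  · obtain ⟨σ, hσ, hσc⟩ := hc.exists_movesAlongEdges
    obtain ⟨M, hM, hMC, hcard⟩ :=
      exists_isMatching_subset_ncard_verts_eq G ({w | w ∈ c.support}ᶜ : Set V)
    obtain ⟨τ, hτ, hτM⟩ := hM.exists_movesAlongEdges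
    have hsupp (π : Equiv.Perm V) : ((π.support : Finset V) : Set V) = {v | π v ≠ v} :=
      Equiv.Perm.coe_support_eq_set_support π
    have hdisj : σ.Disjoint τ := by
      rw [Equiv.Perm.disjoint_iff_disjoint_support, ← Finset.disjoint_coe, hsupp, hsupp, hσc,
        hτM]
      exact Set.disjoint_of_subset_right hMC disjoint_compl_right
    have h := (hσ.mul hτ hdisj).ncard_le_maxMovedCard
    rwa [← hsupp, Set.ncard_coe_finset, hdisj.card_support_mul, ← Set.ncard_coe_finset,
      ← Set.ncard_coe_finset, hsupp, hsupp, hσc, hτM, hc.ncard_support, hcard] at h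

end UniqueCycle

end SimpleGraph

open scoped Classical in
theorem stmt19_general {V : Type*} [Fintype V] (G : SimpleGraph V)
    {x : V} (c : G.Walk x x) (hc : c.IsCycle)
    (huniq : ∀ (y : V) (d : G.Walk y y), d.IsCycle →
      {w | w ∈ d.support} = {w | w ∈ c.support}) :
    ((Odd c.length ∧
        matchingNumber G =
          (c.length - 1) / 2 + matchingNumber (G.induce ({w | w ∈ c.support}ᶜ : Set V))) →
      (perNullity G : ℤ) = (Fintype.card V : ℤ) - 2 * matchingNumber G - 1) ∧
    (¬(Odd c.length ∧
        matchingNumber G =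
          (c.length - 1) / 2 + matchingNumber (G.induce ({w | w ∈ c.support}ᶜ : Set V))) →
      (perNullity G : ℤ) = (Fintype.card V : ℤ) - 2 * matchingNumber G) := by
  have hmatching := hc.length_div_two_add_matchingNumber_le
  rw [perNullity_eq_card_sub_maxMovedCard, Nat.cast_sub G.maxMovedCard_le_card,
    maxMovedCard_eq_max_of_unique_cycle hc huniq, Nat.odd_iff]
  constructor <;> intro <;> omega

open scoped Classical in
theorem stmt19 {V : Type*} [Fintype V] (G : SimpleGraph V) (hconn : G.Connected)
    (hcard : G.edgeSet.ncard = Fintype.card V)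
    {x : V} (c : G.Walk x x) (hc : c.IsCycle)
    (huniq : ∀ (y : V) (d : G.Walk y y), d.IsCycle →
      {w | w ∈ d.support} = {w | w ∈ c.support}) :
    ((Odd c.length ∧
        matchingNumber G =
          (c.length - 1) / 2 + matchingNumber (G.induce ({w | w ∈ c.support}ᶜ : Set V))) →
      (perNullity G : ℤ) = (Fintype.card V : ℤ) - 2 * matchingNumber G - 1) ∧
    (¬(Odd c.length ∧
        matchingNumber G =
          (c.length - 1) / 2 + matchingNumber (G.induce ({w | w ∈ c.support}ᶜ : Set V))) →
      (perNullity G : ℤ) = (Fintype.card V : ℤ) - 2 * matchingNumber G) :=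
  stmt19_general G c hc huniq
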